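/- The linear span of the scattering polynomials {φ^{(p,q)} : p, q ≥ 1} is dense in L²(D, dxdy) (with ordinary Lebesgue measure), so scattering polynomials form a (not necessarily orthogonal) complete system in L²(D, dxdy) all of whose members vanish on the boundary circle. -/

import Mathlib

open MeasureTheory Complex

/-- Wirtinger derivative ∂/∂z = (∂ₓ - i∂ᵧ)/2 -/
noncomputable def wdz (f : ℂ → ℂ) (z : ℂ) : ℂ :=
  (fderiv ℝ f z 1 - Complex.I * fderiv ℝ f z Complex.I) / 2

/-- Wirtinger derivative ∂/∂z̄ = (∂ₓ + i∂ᵧ)/2 -/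
noncomputable def wdzbar (f : ℂ → ℂ) (z : ℂ) : ℂ :=
  (fderiv ℝ f z 1 + Complex.I * fderiv ℝ f z Complex.I) / 2

/-- Scattering polynomial φ^{(p,q)} given by the Rodrigues-type formula
    φ^{(p,q)}(z) = ((-1)^p / (q (p+q-1)!)) (1 - z z̄) ∂^{p+q}/∂z^p ∂z̄^q (1 - z z̄)^{p+q-1}. -/
noncomputable def scatter (p q : ℕ) : ℂ → ℂ := fun z =>
  ((-1 : ℂ) ^ p / (q * Nat.factorial (p + q - 1))) * (1 - z * (starRingEnd ℂ) z) *
    (wdz^[p] (wdzbar^[q] (fun w => (1 - w * (starRingEnd ℂ) w) ^ (p + q - 1))) z)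
/-- The open unit disk in ℂ. -/
def unitDisk : Set ℂ := {z : ℂ | ‖z‖ < 1}

/-- The measure dxdy/(1-x²-y²) on the unit disk. -/
noncomputable def diskMeasure : Measure ℂ :=
  (volume.restrict unitDisk).withDensity fun z => ENNReal.ofReal (1 - Complex.normSq z)⁻¹

/-!
Expanding the Rodrigues formula gives `φ^{(p,q)} = (1 - |z|²) Σ_j c_j z^(j-p) z̄^(j-q)`. For
`φ^{(b+1,a+1)}` this expansion is triangular: the top term is a nonzero multiple of
`(1 - |z|²) z^a z̄^b` and all other terms have lower total degree. Hence the span of the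
scattering polynomials contains every `(1 - |z|²) z^a z̄^b`. If `F ∈ L²(D)` is orthogonal to all
of them, the integrable function `(1 - |z|²) F` is orthogonal to every polynomial in `z, z̄`, hence
(Stone–Weierstrass on the closed disk) to every continuous function, so it vanishes a.e.; since
`1 - |z|² > 0` on `D`, `F = 0`.
-/

open ComplexConjugate

noncomputable section

def monomialZZbar (a b : ℕ) (z : ℂ) : ℂ := z ^ a * conj z ^ b

def wirtingerCLM (α β : ℂ) : ℂ →L[ℝ] ℂ :=
  α • ContinuousLinearMap.id ℝ ℂ + β • Complex.conjCLE.toContinuousLinearMap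

@[simp]
lemma wirtingerCLM_apply (α β v : ℂ) : wirtingerCLM α β v = α * v + β * conj v := by
  simp [wirtingerCLM]

lemma wdz_of_hasFDerivAt {f : ℂ → ℂ} {α β z : ℂ} (h : HasFDerivAt f (wirtingerCLM α β) z) :
    wdz f z = α := by
  rw [wdz, h.fderiv]
  simp only [wirtingerCLM_apply, map_one, Complex.conj_I]
  ring_nf
  simp only [Complex.I_sq]
  ring

lemma wdzbar_of_hasFDerivAt {f : ℂ → ℂ} {α β z : ℂ} (h : HasFDerivAt f (wirtingerCLM α β) z) :
    wdzbar f z = β := by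
  rw [wdzbar, h.fderiv]
  simp only [wirtingerCLM_apply, map_one, Complex.conj_I]
  ring_nf
  simp only [Complex.I_sq]
  ring

lemma hasFDerivAt_monomialZZbar (a b : ℕ) (z : ℂ) :
    HasFDerivAt (monomialZZbar a b)
      (wirtingerCLM (a * z ^ (a - 1) * conj z ^ b) (b * z ^ a * conj z ^ (b - 1))) z := by
  have hz : HasFDerivAt (fun z : ℂ => z ^ a)
      ((ContinuousLinearMap.smulRight (1 : ℂ →L[ℂ] ℂ) (a * z ^ (a - 1))).restrictScalars ℝ) z :=
    (hasDerivAt_pow a z).hasFDerivAt.restrictScalars ℝ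
  have hzbar : HasFDerivAt (fun z : ℂ => conj z ^ b)
      (((ContinuousLinearMap.smulRight (1 : ℂ →L[ℂ] ℂ) (b * conj z ^ (b - 1))).restrictScalars
        ℝ).comp Complex.conjCLE.toContinuousLinearMap) z :=
    ((hasDerivAt_pow b (conj z)).hasFDerivAt.restrictScalars ℝ).comp z
      Complex.conjCLE.hasFDerivAt
  refine (hz.mul hzbar).congr_fderiv (ContinuousLinearMap.ext fun v => ?_)
  simp
  ring

section MonomialSum

variable {ι : Type*}

def monomialSum (s : Finset ι) (c : ι → ℂ) (A B : ι → ℕ) (z : ℂ) : ℂ :=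
  ∑ j ∈ s, c j * monomialZZbar (A j) (B j) z

lemma hasFDerivAt_monomialSum (s : Finset ι) (c : ι → ℂ) (A B : ι → ℕ) (z : ℂ) :
    HasFDerivAt (monomialSum s c A B)
      (wirtingerCLM (∑ j ∈ s, c j * (A j * z ^ (A j - 1) * conj z ^ B j))
        (∑ j ∈ s, c j * (B j * z ^ A j * conj z ^ (B j - 1)))) z := by
  refine (HasFDerivAt.fun_sum fun j _ => (hasFDerivAt_monomialZZbar (A j) (B j) z).const_mul (c j))
    |>.congr_fderiv (ContinuousLinearMap.ext fun v => ?_)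
  simp [Finset.sum_mul, ← Finset.sum_add_distrib, mul_add, mul_assoc]

lemma wdz_monomialSum (s : Finset ι) (c : ι → ℂ) (A B : ι → ℕ) :
    wdz (monomialSum s c A B) = monomialSum s (fun j => c j * A j) (fun j => A j - 1) B := by
  funext z
  rw [wdz_of_hasFDerivAt (hasFDerivAt_monomialSum s c A B z)]
  refine Finset.sum_congr rfl fun j _ => ?_
  simp only [monomialZZbar]
  ring

lemma wdzbar_monomialSum (s : Finset ι) (c : ι → ℂ) (A B : ι → ℕ) :
    wdzbar (monomialSum s c A B) = monomialSum s (fun j => c j * B j) A (fun j => B j - 1) := by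
  funext z
  rw [wdzbar_of_hasFDerivAt (hasFDerivAt_monomialSum s c A B z)]
  refine Finset.sum_congr rfl fun j _ => ?_
  simp only [monomialZZbar]
  ring

lemma wdz_iterate_monomialSum (p : ℕ) (s : Finset ι) (c : ι → ℂ) (A B : ι → ℕ) :
    wdz^[p] (monomialSum s c A B)
      = monomialSum s (fun j => c j * (A j).descFactorial p) (fun j => A j - p) B := by
  induction p with
  | zero => simp
  | succ n ih =>
    rw [Function.iterate_succ_apply', ih, wdz_monomialSum]
    simp only [Nat.descFactorial_succ, Nat.sub_sub, Nat.cast_mul, mul_comm, mul_left_comm]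

lemma wdzbar_iterate_monomialSum (q : ℕ) (s : Finset ι) (c : ι → ℂ) (A B : ι → ℕ) :
    wdzbar^[q] (monomialSum s c A B)
      = monomialSum s (fun j => c j * (B j).descFactorial q) A (fun j => B j - q) := by
  induction q with
  | zero => simp
  | succ n ih =>
    rw [Function.iterate_succ_apply', ih, wdzbar_monomialSum]
    simp only [Nat.descFactorial_succ, Nat.sub_sub, Nat.cast_mul, mul_comm, mul_left_comm]

end MonomialSum

lemma one_sub_mul_conj_pow_eq_monomialSum (m : ℕ) :
    (fun z : ℂ => (1 - z * conj z) ^ m)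
      = monomialSum (Finset.range (m + 1)) (fun j => m.choose j * (-1) ^ j) id id := by
  funext z
  rw [sub_eq_neg_add, add_pow]
  refine Finset.sum_congr rfl fun j _ => ?_
  rw [one_pow, mul_one, neg_pow, mul_pow]
  simp only [monomialZZbar, id]
  ring

def scatterCoeff (p q j : ℕ) : ℂ :=
  (-1) ^ p / (q * (p + q - 1).factorial) * (p + q - 1).choose j * (-1) ^ j *
    j.descFactorial q * j.descFactorial p

def weightedMonomial (a b : ℕ) (z : ℂ) : ℂ := (1 - z * conj z) * monomialZZbar a b z

lemma scatter_eq_sum (p q : ℕ) :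
    scatter p q = ∑ j ∈ Finset.range (p + q - 1 + 1),
      scatterCoeff p q j • weightedMonomial (j - p) (j - q) := by
  funext z
  rw [scatter, one_sub_mul_conj_pow_eq_monomialSum, wdzbar_iterate_monomialSum,
    wdz_iterate_monomialSum, Finset.sum_apply, monomialSum, Finset.mul_sum]
  refine Finset.sum_congr rfl fun j _ => ?_
  simp only [scatterCoeff, weightedMonomial, id, Pi.smul_apply, smul_eq_mul]
  ring

lemma scatter_eq_zero_of_norm_eq_one (p q : ℕ) {z : ℂ} (hz : ‖z‖ = 1) : scatter p q z = 0 := by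
  have : z * conj z = 1 := by
    rw [Complex.mul_conj, Complex.normSq_eq_norm_sq, hz]
    norm_num
  simp [scatter, this]

@[fun_prop]
lemma continuous_monomialZZbar (a b : ℕ) : Continuous (monomialZZbar a b) := by
  unfold monomialZZbar
  fun_prop

@[fun_prop]
lemma continuous_weightedMonomial (a b : ℕ) : Continuous (weightedMonomial a b) := by
  unfold weightedMonomial
  fun_prop

lemma continuous_scatter (p q : ℕ) : Continuous (scatter p q) := by
  rw [scatter_eq_sum, Finset.sum_fn]
  fun_prop

lemma scatterCoeff_eq_zero_of_lt_left {p q j : ℕ} (h : j < p) : scatterCoeff p q j = 0 := by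
  simp [scatterCoeff, Nat.descFactorial_eq_zero_iff_lt.mpr h]

lemma scatterCoeff_eq_zero_of_lt_right {p q j : ℕ} (h : j < q) : scatterCoeff p q j = 0 := by
  simp [scatterCoeff, Nat.descFactorial_eq_zero_iff_lt.mpr h]

lemma scatterCoeff_top_ne_zero (a b : ℕ) : scatterCoeff (b + 1) (a + 1) (a + b + 1) ≠ 0 := by
  have hn : b + 1 + (a + 1) - 1 = a + b + 1 := by omega
  simp only [scatterCoeff, hn, Nat.choose_self, Nat.cast_one, mul_one]
  refine mul_ne_zero (mul_ne_zero (mul_ne_zero ?_ (by simp)) ?_) ?_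
  · exact div_ne_zero (by simp)
      (mul_ne_zero (by norm_cast) (by exact_mod_cast (a + b + 1).factorial_ne_zero))
  all_goals exact Nat.cast_ne_zero.mpr (Nat.descFactorial_eq_zero_iff_lt.not.mpr (by omega))

def scatterSpan : Submodule ℂ (ℂ → ℂ) :=
  Submodule.span ℂ {f | ∃ p q, 1 ≤ p ∧ 1 ≤ q ∧ scatter p q = f}

theorem weightedMonomial_mem_scatterSpan (a b : ℕ) : weightedMonomial a b ∈ scatterSpan := by
  induction h : a + b using Nat.strong_induction_on generalizing a b with
  | _ n ih =>
  set c := scatterCoeff (b + 1) (a + 1)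
  have hscatter : scatter (b + 1) (a + 1) ∈ scatterSpan :=
    Submodule.subset_span ⟨b + 1, a + 1, by omega, by omega, rfl⟩
  have hlower : ∑ j ∈ Finset.range (a + b + 1), c j • weightedMonomial (j - (b + 1)) (j - (a + 1))
      ∈ scatterSpan := by
    refine Submodule.sum_mem _ fun j hj => ?_
    by_cases hja : j < b + 1
    · simp [c, scatterCoeff_eq_zero_of_lt_left hja]
    by_cases hjb : j < a + 1
    · simp [c, scatterCoeff_eq_zero_of_lt_right hjb]
    have hj_lt := Finset.mem_range.mp hj
    exact Submodule.smul_mem _ _ (ih _ (by omega) _ _ rfl)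
  have hexpand := scatter_eq_sum (b + 1) (a + 1)
  rw [show b + 1 + (a + 1) - 1 + 1 = a + b + 1 + 1 by omega, Finset.sum_range_succ,
    show a + b + 1 - (b + 1) = a by omega, show a + b + 1 - (a + 1) = b by omega] at hexpand
  have hsolve : weightedMonomial a b
      = (c (a + b + 1))⁻¹ • (scatter (b + 1) (a + 1) -
          ∑ j ∈ Finset.range (a + b + 1), c j • weightedMonomial (j - (b + 1)) (j - (a + 1))) := by
    rw [hexpand, add_sub_cancel_left, smul_smul, inv_mul_cancel₀ (scatterCoeff_top_ne_zero a b),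
      one_smul]
  rw [hsolve]
  exact Submodule.smul_mem _ _ (Submodule.sub_mem _ hscatter hlower)

section IntegralOrthogonal

variable {α : Type*} [MeasurableSpace α]

/-- For `P, F ∈ L²(μ)` membership says `⟪P, F⟫ = 0`. -/
def integralOrthogonal (μ : Measure α) (F : α → ℂ) : Submodule ℂ (α → ℂ) where
  carrier := {P | Integrable (fun x => conj (P x) * F x) μ ∧ ∫ x, conj (P x) * F x ∂μ = 0}
  add_mem' := by
    rintro P Q ⟨hPi, hP⟩ ⟨hQi, hQ⟩
    simp only [Set.mem_ofPred_eq, Pi.add_apply, map_add, add_mul]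
    exact ⟨hPi.add hQi, by rw [integral_add hPi hQi, hP, hQ, add_zero]⟩
  zero_mem' := by simp
  smul_mem' := by
    rintro c P ⟨hPi, hP⟩
    simp only [Set.mem_ofPred_eq, Pi.smul_apply, smul_eq_mul, map_mul, mul_assoc]
    exact ⟨hPi.const_mul _, by rw [integral_const_mul, hP, mul_zero]⟩

variable {μ : Measure α}

lemma mem_integralOrthogonal_mul_left_iff {c P F : α → ℂ} :
    (fun x => c x * P x) ∈ integralOrthogonal μ F ↔
      P ∈ integralOrthogonal μ (fun x => conj (c x) * F x) := by
  have : (fun x => conj (c x * P x) * F x) = fun x => conj (P x) * (conj (c x) * F x) := by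
    funext x
    rw [map_mul]
    ring
  simp only [integralOrthogonal, Submodule.mem_mk, AddSubmonoid.mem_mk,
    AddSubsemigroup.mem_mk, Set.mem_ofPred_eq, this]

lemma mem_integralOrthogonal_of_inner_eq_zero {P : α → ℂ} (hP : MemLp P 2 μ) {F : Lp ℂ 2 μ}
    (h : inner ℂ (hP.toLp P) F = 0) : P ∈ integralOrthogonal μ F := by
  have hae : (fun x => inner ℂ (hP.toLp P x) (F x)) =ᵐ[μ] fun x => conj (P x) * F x := by
    filter_upwards [hP.coeFn_toLp] with x hx
    rw [hx, RCLike.inner_apply']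
  refine ⟨(L2.integrable_inner _ F).congr hae, ?_⟩
  rw [← integral_congr_ae hae, ← L2.inner_def, h]

end IntegralOrthogonal

def polynomialsZZbar : Submodule ℂ (ℂ → ℂ) :=
  Submodule.span ℂ (Set.range fun ab : ℕ × ℕ => monomialZZbar ab.1 ab.2)

lemma monomialZZbar_mem_polynomialsZZbar (a b : ℕ) : monomialZZbar a b ∈ polynomialsZZbar :=
  Submodule.subset_span ⟨(a, b), rfl⟩

lemma mul_mem_polynomialsZZbar {P Q : ℂ → ℂ} (hP : P ∈ polynomialsZZbar)
    (hQ : Q ∈ polynomialsZZbar) : P * Q ∈ polynomialsZZbar := by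
  have hPQ := Submodule.mul_mem_mul hP hQ
  rw [polynomialsZZbar, Submodule.span_mul_span] at hPQ
  refine Submodule.span_le.mpr ?_ hPQ
  rintro _ ⟨_, ⟨⟨a, b⟩, rfl⟩, _, ⟨⟨a', b'⟩, rfl⟩, rfl⟩
  have : monomialZZbar a b * monomialZZbar a' b' = monomialZZbar (a + a') (b + b') := by
    funext z
    simp only [Pi.mul_apply, monomialZZbar, pow_add]
    ring
  change monomialZZbar a b * monomialZZbar a' b' ∈ polynomialsZZbar
  exact this ▸ monomialZZbar_mem_polynomialsZZbar (a + a') (b + b')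

theorem exists_mem_polynomialsZZbar_norm_sub_lt {K : Set ℂ} (hK : IsCompact K) {u : ℂ → ℂ}
    (hu : ContinuousOn u K) {δ : ℝ} (hδ : 0 < δ) :
    ∃ P ∈ polynomialsZZbar, ∀ z ∈ K, ‖u z - P z‖ < δ := by
  have : CompactSpace K := isCompact_iff_compactSpace.mp hK
  have hrestr : ∀ f ∈ (polynomialFunctions K).starClosure,
      ∃ P ∈ polynomialsZZbar, ∀ z : K, f z = P z := by
    intro f hf
    rw [polynomialFunctions.starClosure_eq_adjoin_X] at hf
    induction hf using Algebra.adjoin_induction with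
    | mem f hf =>
      rcases hf with rfl | hf
      · exact ⟨_, monomialZZbar_mem_polynomialsZZbar 1 0, fun z => by simp [monomialZZbar]⟩
      · rw [Set.mem_star, Set.mem_singleton_iff, star_eq_iff_star_eq, eq_comm] at hf
        subst hf
        exact ⟨_, monomialZZbar_mem_polynomialsZZbar 0 1, fun z => by simp [monomialZZbar]⟩
    | algebraMap r =>
      exact ⟨r • monomialZZbar 0 0, Submodule.smul_mem _ _ (monomialZZbar_mem_polynomialsZZbar 0 0),
        fun z => by simp [monomialZZbar, Algebra.algebraMap_eq_smul_one]⟩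
    | add f g _ _ hf hg =>
      obtain ⟨P, hP, hfP⟩ := hf
      obtain ⟨Q, hQ, hgQ⟩ := hg
      exact ⟨P + Q, Submodule.add_mem _ hP hQ, fun z => by simp [hfP, hgQ]⟩
    | mul f g _ _ hf hg =>
      obtain ⟨P, hP, hfP⟩ := hf
      obtain ⟨Q, hQ, hgQ⟩ := hg
      exact ⟨P * Q, mul_mem_polynomialsZZbar hP hQ, fun z => by simp [hfP, hgQ]⟩
  set U : C(K, ℂ) := ⟨K.domRestrict u, hu.domRestrict⟩
  have hdense : U ∈ closure ((polynomialFunctions K).starClosure : Set C(K, ℂ)) := by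
    rw [← StarSubalgebra.topologicalClosure_coe,
      polynomialFunctions.starClosure_topologicalClosure]
    trivial
  obtain ⟨f, hf, hUf⟩ := Metric.mem_closure_iff.mp hdense δ hδ
  obtain ⟨P, hP, hfP⟩ := hrestr f hf
  refine ⟨P, hP, fun z hz => ?_⟩
  calc ‖u z - P z‖ = dist (U ⟨z, hz⟩) (f ⟨z, hz⟩) := by rw [hfP, dist_eq_norm]; rfl
    _ ≤ dist U f := ContinuousMap.dist_apply_le_dist _
    _ < δ := hUf

section CompactlyConcentrated

variable {α : Type*} [TopologicalSpace α] [MeasurableSpace α] [OpensMeasurableSpace α]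
  {μ : Measure α} {K : Set α}

lemma Continuous.integrable_mul_of_isCompact {u w : α → ℂ} (hu : Continuous u) (hK : IsCompact K)
    (hμK : ∀ᵐ x ∂μ, x ∈ K) (hw : Integrable w μ) : Integrable (fun x => u x * w x) μ := by
  obtain ⟨C, hC⟩ := hK.exists_bound_of_continuousOn hu.continuousOn
  exact hw.bdd_mul hu.aestronglyMeasurable (hμK.mono hC)

lemma Continuous.memLp_of_isCompact [IsFiniteMeasure μ] {u : α → ℂ} (hu : Continuous u)
    (hK : IsCompact K) (hμK : ∀ᵐ x ∂μ, x ∈ K) (p : ENNReal) : MemLp u p μ := by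
  obtain ⟨C, hC⟩ := hK.exists_bound_of_continuousOn hu.continuousOn
  exact MemLp.of_bound hu.aestronglyMeasurable C (hμK.mono hC)

end CompactlyConcentrated

section Annihilator

variable {μ : Measure ℂ} {K : Set ℂ} {w : ℂ → ℂ}

theorem mem_integralOrthogonal_of_continuous (hK : IsCompact K) (hμK : ∀ᵐ z ∂μ, z ∈ K)
    (hw : Integrable w μ) (hpoly : polynomialsZZbar ≤ integralOrthogonal μ w) {u : ℂ → ℂ}
    (hu : Continuous u) : u ∈ integralOrthogonal μ w := by
  have hint : Integrable (fun z => conj (u z) * w z) μ :=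
    (by fun_prop : Continuous fun z => conj (u z)).integrable_mul_of_isCompact hK hμK hw
  refine ⟨hint, norm_le_zero_iff.mp (le_of_forall_pos_le_add fun ε hε => ?_)⟩
  set C := ∫ z, ‖w z‖ ∂μ
  have hC : 0 ≤ C := integral_nonneg fun z => norm_nonneg _
  obtain ⟨P, hP, huP⟩ :=
    exists_mem_polynomialsZZbar_norm_sub_lt hK hu.continuousOn (δ := ε / (C + 1)) (by positivity)
  obtain ⟨hPint, hP0⟩ := hpoly hP
  have hsub : ∫ z, conj (u z) * w z ∂μ = ∫ z, conj (u z - P z) * w z ∂μ := by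
    simp only [map_sub, sub_mul]
    rw [integral_sub hint hPint, hP0, sub_zero]
  have hbound : ∀ᵐ z ∂μ, ‖conj (u z - P z) * w z‖ ≤ ε / (C + 1) * ‖w z‖ := by
    filter_upwards [hμK] with z hz
    rw [norm_mul, Complex.norm_conj]
    exact mul_le_mul_of_nonneg_right (huP z hz).le (norm_nonneg _)
  calc ‖∫ z, conj (u z) * w z ∂μ‖ ≤ ∫ z, ε / (C + 1) * ‖w z‖ ∂μ := by
        rw [hsub]
        exact norm_integral_le_of_norm_le (hw.norm.const_mul _) hbound
    _ = ε / (C + 1) * C := integral_const_mul _ _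
    _ ≤ 0 + ε := by
        rw [zero_add, div_mul_eq_mul_div, div_le_iff₀ (by positivity)]
        nlinarith

theorem ae_eq_zero_of_polynomialsZZbar_le_integralOrthogonal (hK : IsCompact K)
    (hμK : ∀ᵐ z ∂μ, z ∈ K) (hw : Integrable w μ)
    (hpoly : polynomialsZZbar ≤ integralOrthogonal μ w) : w =ᵐ[μ] 0 := by
  refine ae_eq_zero_of_integral_contDiff_smul_eq_zero hw.locallyIntegrable fun g hg _ => ?_
  have := (mem_integralOrthogonal_of_continuous hK hμK hw hpoly
    (Complex.continuous_ofReal.comp hg.continuous)).2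
  simpa only [Function.comp_apply, Complex.conj_ofReal, Complex.real_smul] using this

end Annihilator

lemma unitDisk_eq_ball : unitDisk = Metric.ball 0 1 := by
  ext z
  simp [unitDisk]

lemma measurableSet_unitDisk : MeasurableSet unitDisk :=
  unitDisk_eq_ball ▸ measurableSet_ball

instance : IsFiniteMeasure (volume.restrict unitDisk) :=
  isFiniteMeasure_restrict.2 (unitDisk_eq_ball ▸ measure_ball_lt_top.ne)

lemma ae_restrict_unitDisk_mem_closedBall :
    ∀ᵐ z ∂volume.restrict unitDisk, z ∈ Metric.closedBall (0 : ℂ) 1 :=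
  (ae_restrict_mem measurableSet_unitDisk).mono fun _ hz =>
    Metric.ball_subset_closedBall (unitDisk_eq_ball ▸ hz)

lemma memLp_scatter (p q : ℕ) : MemLp (scatter p q) 2 (volume.restrict unitDisk) :=
  (continuous_scatter p q).memLp_of_isCompact (isCompact_closedBall 0 1)
    ae_restrict_unitDisk_mem_closedBall 2

lemma one_sub_mul_conj_ne_zero {z : ℂ} (hz : z ∈ unitDisk) : 1 - z * conj z ≠ 0 := by
  have : Complex.normSq z < 1 := by
    rw [Complex.normSq_eq_norm_sq]
    exact pow_lt_one₀ (norm_nonneg z) hz two_ne_zero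
  rw [Complex.mul_conj, sub_ne_zero]
  exact_mod_cast this.ne'

theorem eq_zero_of_forall_inner_scatter_eq_zero {F : Lp ℂ 2 (volume.restrict unitDisk)}
    (hF : ∀ p q, 1 ≤ p → 1 ≤ q → inner ℂ ((memLp_scatter p q).toLp (scatter p q)) F = 0) :
    F = 0 := by
  have hscatter : scatterSpan ≤ integralOrthogonal (volume.restrict unitDisk) F := by
    refine Submodule.span_le.mpr ?_
    rintro _ ⟨p, q, hp, hq, rfl⟩
    exact mem_integralOrthogonal_of_inner_eq_zero _ (hF p q hp hq)
  set w := fun z => conj (1 - z * conj z) * F z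
  have hpoly : polynomialsZZbar ≤ integralOrthogonal (volume.restrict unitDisk) w := by
    refine Submodule.span_le.mpr ?_
    rintro _ ⟨⟨a, b⟩, rfl⟩
    exact mem_integralOrthogonal_mul_left_iff.mp (hscatter (weightedMonomial_mem_scatterSpan a b))
  have hw : Integrable w (volume.restrict unitDisk) :=
    (by fun_prop : Continuous fun z : ℂ => conj (1 - z * conj z)).integrable_mul_of_isCompact
      (isCompact_closedBall 0 1) ae_restrict_unitDisk_mem_closedBall
      ((Lp.memLp F).integrable one_le_two)
  have hw0 := ae_eq_zero_of_polynomialsZZbar_le_integralOrthogonal (isCompact_closedBall 0 1)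
    ae_restrict_unitDisk_mem_closedBall hw hpoly
  rw [Lp.eq_zero_iff_ae_eq_zero]
  filter_upwards [hw0, ae_restrict_mem measurableSet_unitDisk] with z hz hzD
  exact (mul_eq_zero.mp hz).resolve_left ((map_ne_zero _).mpr (one_sub_mul_conj_ne_zero hzD))

end

/-- The span of the scattering polynomials is dense in L²(D, dxdy); moreover every
    scattering polynomial vanishes on the boundary circle. -/
theorem scatter_complete_in_L2_lebesgue :
    (∃ h : ∀ p q : ℕ, 1 ≤ p → 1 ≤ q → MemLp (scatter p q) 2 (volume.restrict unitDisk),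
      Dense (↑(Submodule.span ℂ
        (Set.range fun x : {pq : ℕ × ℕ // 1 ≤ pq.1 ∧ 1 ≤ pq.2} =>
          (h x.1.1 x.1.2 x.2.1 x.2.2).toLp (scatter x.1.1 x.1.2)))
        : Set (Lp ℂ 2 (volume.restrict unitDisk)))) ∧
    ∀ p q : ℕ, 1 ≤ p → 1 ≤ q → ∀ z : ℂ, ‖z‖ = 1 → scatter p q z = 0 := by
  refine ⟨⟨fun p q _ _ => memLp_scatter p q, ?_⟩,
    fun p q _ _ _ hz => scatter_eq_zero_of_norm_eq_one p q hz⟩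
  rw [Submodule.dense_iff_topologicalClosure_eq_top, Submodule.topologicalClosure_eq_top_iff,
    Submodule.eq_bot_iff]
  intro F hF
  refine eq_zero_of_forall_inner_scatter_eq_zero fun p q hp hq =>
    Submodule.inner_right_of_mem_orthogonal ?_ hF
  exact Submodule.subset_span ⟨⟨(p, q), hp, hq⟩, rfl⟩
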